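/- arXiv:2404.12057 — 6 statements merged into one kernel-verified Lean document; each statement's English description precedes it below -/
import Mathlib

section
/- Ultrafilter lemma for sets with walls: if (S,P) is a set with walls and φ is a filter on P supported on a subset Q ⊆ P, then there exists an ultrafilter x on P with x(h) = φ(h) for every h ∈ Q. -/
/-!
For a halfspace `C` of one wall and a halfspace `D` of another, the filter condition (if `C ⊆ D'`
for a halfspace `D'` of the second wall then `D' = D`) says exactly that `C` and `D` intersect,
as long as `S` is nonempty. So the halfspaces chosen by `φ` form an intersecting family of
subsets of `S`; by Zorn it lies in a maximal intersecting family, which contains `A` or `Aᶜ` for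
every `A`, and orienting each wall towards its halfspace in that family is the ultrafilter.
-/

open Set

namespace WallDuality

variable {S : Type*}

/-- A wall on `S`, recorded as the unordered pair of its two complementary halfspaces. -/
def IsWall (h : Set (Set S)) : Prop := ∃ A : Set S, h = {A, Aᶜ}

/-- A set with walls: every element of `P` is a wall on `S`. -/
def IsWallSystem (P : Set (Set (Set S))) : Prop := ∀ h ∈ P, IsWall h

variable (P : Set (Set (Set S)))

/-- An ultrafilter on `P`: a consistent choice of a halfspace of each wall of `P`. -/
def IsUltra (x : ↥P → Set S) : Prop :=
  (∀ w : ↥P, x w ∈ w.1) ∧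
    ∀ (w₁ w₂ : ↥P) (A B : Set S), A ∈ w₁.1 → B ∈ w₂.1 → A ⊆ B → x w₁ = A → x w₂ = B

/-- The set `X̂` of all ultrafilters on `P`. -/
def hatX : Set (↥P → Set S) := {x | IsUltra P x}

/-- The principal ultrafilter of a point `s`: each wall is oriented towards `s`. -/
def principalUF (s : S) : ↥P → Set S := fun w => ⋃₀ {A | A ∈ w.1 ∧ s ∈ A}

/-- The pseudodistance associated with a collection `C` of subsets of `P`:
the supremum of the cardinalities of members of `C` all of whose walls separate
the two orientations. -/
noncomputable def wallDist (C : Set (Set ↥P)) (x y : ↥P → Set S) : ℕ∞ :=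
  ⨆ c ∈ {c | c ∈ C ∧ ∀ w ∈ c, x w ≠ y w}, c.encard

/-- A dualisable system on `(S, P)`. -/
structure IsDualisable (C : Set (Set ↥P)) : Prop where
  singleton_mem : ∀ w : ↥P, ({w} : Set ↥P) ∈ C
  subset_mem : ∀ c ∈ C, ∀ c' ⊆ c, c' ∈ C
  bounded : ∀ s t : S, ∃ M : ℕ, ∀ c ∈ C,
    (∀ w ∈ c, principalUF P s w ≠ principalUF P t w) → c.encard ≤ (M : ℕ∞)

/-- The dual space `X_C`: ultrafilters at finite distance from all principal ones. -/
def dualSpace (C : Set (Set ↥P)) : Set (↥P → Set S) :=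
  {x | IsUltra P x ∧ ∀ s : S, wallDist P C x (principalUF P s) ≠ ⊤}

/-- The majority-vote median of three orientations. -/
def medianUF (x y z : ↥P → Set S) : ↥P → Set S :=
  fun w => x w ∩ y w ∪ x w ∩ z w ∪ y w ∩ z w

/-- A `P`-convex subset of `X̂`: an intersection of halfspaces. -/
def IsPConvex (C' : Set (↥P → Set S)) : Prop :=
  ∃ (Q : Set ↥P) (σ : ↥P → Set S), (∀ w ∈ Q, σ w ∈ w.1) ∧
    C' = {v | IsUltra P v ∧ ∀ w ∈ Q, v w = σ w}

open scoped Classical in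
/-- The gate of `z` to a set `C'` of orientations: reverse the orientation of exactly
those walls that separate `z` from `C'`. -/
noncomputable def gateUF (C' : Set (↥P → Set S)) (z : ↥P → Set S) : ↥P → Set S :=
  fun w => if ∃ v ∈ C', v w = z w then z w else (z w)ᶜ

/-- `A` is gated in `Y` (with respect to the majority-vote median). -/
def IsGatedIn (Y A : Set (↥P → Set S)) : Prop :=
  ∀ x ∈ Y, ∃! g, g ∈ A ∧ ∀ a ∈ A, medianUF P a g x = g

/-- `σ` is a nested choice of halfspaces witnessing that `c` is a chain. -/
def IsChainOrder (σ : ↥P → Set S) (c : Set ↥P) : Prop :=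
  (∀ w ∈ c, σ w ∈ w.1) ∧ ∀ w₁ ∈ c, ∀ w₂ ∈ c, σ w₁ ⊆ σ w₂ ∨ σ w₂ ⊆ σ w₁

/-- A chain of walls. -/
def IsWallChain (c : Set ↥P) : Prop := ∃ σ, IsChainOrder P σ c

/-- A system of chains: a dualisable system all of whose members are chains. -/
def IsChainSystem (C : Set (Set ↥P)) : Prop :=
  IsDualisable P C ∧ ∀ c ∈ C, IsWallChain P c

/-- `C` is `m`-gluable: two members of `C`, one entirely preceding the other and with
union a chain, can be glued after removing at most `m` consecutive walls taken from
the last `m` walls of the first and the first `m` walls of the second. -/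
def IsGluable (C : Set (Set ↥P)) (m : ℕ) : Prop :=
  ∀ c₁ ∈ C, ∀ c₂ ∈ C, ∀ σ : ↥P → Set S,
    IsChainOrder P σ (c₁ ∪ c₂) → Disjoint c₁ c₂ →
    (∀ w₁ ∈ c₁, ∀ w₂ ∈ c₂, σ w₁ ⊆ σ w₂) →
    ∃ b ⊆ c₁ ∪ c₂,
      b.encard ≤ (m : ℕ∞) ∧
      (∀ w ∈ b ∩ c₁, {w' | w' ∈ c₁ ∧ σ w ⊂ σ w'}.encard < (m : ℕ∞)) ∧
      (∀ w ∈ b ∩ c₂, {w' | w' ∈ c₂ ∧ σ w' ⊂ σ w}.encard < (m : ℕ∞)) ∧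
      (∀ w₁ ∈ b, ∀ w₂ ∈ b, ∀ w ∈ c₁ ∪ c₂, σ w₁ ⊆ σ w → σ w ⊆ σ w₂ → w ∈ b) ∧
      (c₁ ∪ c₂) \ b ∈ C

/-- The ball of radius `r` about `x` in `X_C`. -/
def ballX (C : Set (Set ↥P)) (x : ↥P → Set S) (r : ℕ∞) : Set (↥P → Set S) :=
  {z | z ∈ dualSpace P C ∧ wallDist P C x z ≤ r}

/-- The normal wall path: the gate of `y` to the ball of radius `r` about `x`. -/
noncomputable def nwp (C : Set (Set ↥P)) (x y : ↥P → Set S) (r : ℕ) : ↥P → Set S :=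
  gateUF P (ballX P C x (r : ℕ∞)) y

/-- Two walls cross: all four quarterspaces are nonempty. -/
def Crosses (w₁ w₂ : ↥P) : Prop := ∀ A ∈ w₁.1, ∀ B ∈ w₂.1, (A ∩ B).Nonempty

/-- `C` is `L`-separated. -/
def IsSeparated (C : Set (Set ↥P)) (L : ℕ) : Prop :=
  ∀ w₁ w₂ : ↥P, w₁ ≠ w₂ → ({w₁, w₂} : Set ↥P) ∈ C →
    ∀ c ∈ C, (∀ w ∈ c, Crosses P w w₁ ∧ Crosses P w w₂) → c.encard ≤ (L : ℕ∞)

end WallDuality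

namespace Set.Intersecting

variable {α : Type*}

theorem exists_maximal [SemilatticeInf α] [OrderBot α] {s : Set α} (hs : s.Intersecting) :
    ∃ t, s ⊆ t ∧ Maximal Intersecting t := by
  refine zorn_subset_nonempty {t | t.Intersecting} (fun c hc hchain _ => ?_) s hs
  refine ⟨⋃₀ c, ?_, fun t ht => subset_sUnion_of_mem ht⟩
  rintro a ⟨t₁, ht₁, ha⟩ b ⟨t₂, ht₂, hb⟩
  rcases hchain.total ht₁ ht₂ with h | h
  · exact hc ht₂ (h ha) hb
  · exact hc ht₁ ha (h hb)

variable [BooleanAlgebra α] [Nontrivial α] {s : Set α}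

theorem exists_disjoint_of_maximal_of_notMem (hs : Maximal Intersecting s) {a : α} (ha : a ∉ s) :
    ∃ b ∈ s, Disjoint a b := by
  by_cases ha_bot : a = ⊥
  · have htop : ⊤ ∈ s := hs.mem_of_prop_insert <|
      hs.prop.insert top_ne_bot fun b hb hd => hs.prop.ne_bot hb (top_disjoint.1 hd)
    exact ⟨⊤, htop, ha_bot ▸ disjoint_bot_left⟩
  · by_contra! h
    exact ha (hs.mem_of_prop_insert (hs.prop.insert ha_bot h))

theorem mem_or_compl_mem_of_maximal (hs : Maximal Intersecting s) (a : α) : a ∈ s ∨ aᶜ ∈ s := by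
  by_contra! h
  obtain ⟨b, hb, hab⟩ := exists_disjoint_of_maximal_of_notMem hs h.1
  obtain ⟨c, hc, hac⟩ := exists_disjoint_of_maximal_of_notMem hs h.2
  exact hs.prop hb hc (hab.symm.mono_right (disjoint_compl_left_iff.1 hac))

end Set.Intersecting

namespace WallDuality

section

variable {S : Type*} {h : Set (Set S)} {A B C : Set S}

theorem IsWall.mem_iff (hh : IsWall h) (hA : A ∈ h) : B ∈ h ↔ B = A ∨ B = Aᶜ := by
  obtain ⟨D, rfl⟩ := hh
  rcases hA with rfl | rfl <;> simp [or_comm]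

theorem IsWall.compl_mem (hh : IsWall h) (hA : A ∈ h) : Aᶜ ∈ h :=
  (hh.mem_iff hA).2 (Or.inr rfl)

theorem IsWall.eq_of_subset_of_not_disjoint (hh : IsWall h) (hB : B ∈ h) (hC : C ∈ h)
    (hAB : A ⊆ B) (hAC : ¬Disjoint A C) : C = B := by
  rcases (hh.mem_iff hC).1 hB with rfl | rfl
  · rfl
  · exact absurd (subset_compl_iff_disjoint_right.1 hAB) hAC

theorem IsWall.exists_mem_of_maximal [Nonempty S] (hh : IsWall h) {M : Set (Set S)}
    (hM : Maximal Set.Intersecting M) : ∃ A ∈ h, A ∈ M := by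
  obtain ⟨D, rfl⟩ := hh
  rcases Set.Intersecting.mem_or_compl_mem_of_maximal hM D with hD | hD
  · exact ⟨D, mem_insert _ _, hD⟩
  · exact ⟨Dᶜ, mem_insert_of_mem _ rfl, hD⟩

theorem isUltra_of_isEmpty [IsEmpty S] {P : Set (Set (Set S))} (hP : IsWallSystem P)
    (x : ↥P → Set S) : IsUltra P x := by
  refine ⟨fun w => ?_, fun _ _ _ _ _ _ _ _ => Subsingleton.elim _ _⟩
  obtain ⟨A, hA⟩ := hP w.1 w.2
  rw [Subsingleton.elim (x w) A, hA]
  exact mem_insert _ _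

end

theorem filter_extends_to_ultrafilter_general
    {S : Type*} (P Q : Set (Set (Set S))) (hP : IsWallSystem P)
    (φ : ↥P → Set S)
    (hφ_half : ∀ w : ↥P, w.1 ∈ Q → φ w ∈ w.1)
    (hφ_filter : ∀ w₁ w₂ : ↥P, w₁.1 ∈ Q → w₂.1 ∈ Q → ∀ A B : Set S,
      A ∈ w₁.1 → B ∈ w₂.1 → A ⊆ B → φ w₁ = A → φ w₂ = B) :
    ∃ x : ↥P → Set S, IsUltra P x ∧ ∀ w : ↥P, w.1 ∈ Q → x w = φ w := by
  rcases isEmpty_or_nonempty S with _ | _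
  · exact ⟨φ, isUltra_of_isEmpty hP φ, fun _ _ => rfl⟩
  have hφQ : (φ '' {w | w.1 ∈ Q}).Intersecting := by
    rintro _ ⟨w₁, hw₁, rfl⟩ _ ⟨w₂, hw₂, rfl⟩ hdisj
    have hc := (hP w₂.1 w₂.2).compl_mem (hφ_half w₂ hw₂)
    exact ne_compl_self <| hφ_filter w₁ w₂ hw₁ hw₂ _ _ (hφ_half w₁ hw₁) hc
      (subset_compl_iff_disjoint_right.2 hdisj) rfl
  obtain ⟨M, hφM, hM⟩ := hφQ.exists_maximal
  choose x hxw hxM using fun w : ↥P => (hP w.1 w.2).exists_mem_of_maximal hM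
  refine ⟨x, ⟨hxw, ?_⟩, fun w hw => ?_⟩
  · rintro w₁ w₂ A B - hB hAB rfl
    exact (hP w₂.1 w₂.2).eq_of_subset_of_not_disjoint hB (hxw w₂) hAB (hM.prop (hxM w₁) (hxM w₂))
  · exact (hP w.1 w.2).eq_of_subset_of_not_disjoint (hφ_half w hw) (hxw w) subset_rfl
      (hM.prop (hφM ⟨w, hw, rfl⟩) (hxM w))

/-- **Ultrafilter lemma** (Lemma 3.2): every filter on a set with walls extends
to an ultrafilter. -/
theorem filter_extends_to_ultrafilter
    {S : Type*} (P Q : Set (Set (Set S))) (hP : IsWallSystem P) (hQP : Q ⊆ P)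
    (φ : ↥P → Set S)
    (hφ_half : ∀ w : ↥P, w.1 ∈ Q → φ w ∈ w.1)
    (hφ_filter : ∀ w₁ w₂ : ↥P, w₁.1 ∈ Q → w₂.1 ∈ Q → ∀ A B : Set S,
      A ∈ w₁.1 → B ∈ w₂.1 → A ⊆ B → φ w₁ = A → φ w₂ = B) :
    ∃ x : ↥P → Set S, IsUltra P x ∧ ∀ w : ↥P, w.1 ∈ Q → x w = φ w :=
  filter_extends_to_ultrafilter_general P Q hP φ hφ_half hφ_filter

end WallDuality
end

section
/- For any dualisable system C on a set with walls (S,P), the function dist_C on X̂ × X̂ is an extended metric: dist_C(x,y) = dist_C(y,x), dist_C(x,y) = 0 if and only if x = y, and dist_C(x,y) ≤ dist_C(x,z) + dist_C(z,y) for all x,y,z ∈ X̂; moreover dist_C takes only finite values on X_C × X_C and on pairs of principal ultrafilters, so its restrictions to X_C and to {φ_s : s ∈ S} are metrics. -/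
open Set

namespace WallDuality

private lemma wallDist_symm' {S : Type*} (P : Set (Set (Set S))) (C : Set (Set ↥P))
    (x y : ↥P → Set S) : wallDist P C x y = wallDist P C y x := by
  have h : {c | c ∈ C ∧ ∀ w ∈ c, x w ≠ y w} = {c | c ∈ C ∧ ∀ w ∈ c, y w ≠ x w} := by
    ext c
    exact and_congr_right fun _ => forall₂_congr fun w _ => ne_comm
  unfold wallDist
  rw [h]

private lemma wallDist_triangle' {S : Type*} (P : Set (Set (Set S))) (C : Set (Set ↥P))
    (hC : IsDualisable P C) (x y z : ↥P → Set S) :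
    wallDist P C x y ≤ wallDist P C x z + wallDist P C z y := by
  refine iSup₂_le fun c hc => ?_
  obtain ⟨hcC, hsep⟩ := hc
  set c₁ : Set ↥P := {w ∈ c | x w ≠ z w} with hc₁
  set c₂ : Set ↥P := {w ∈ c | x w = z w} with hc₂
  have hunion : c = c₁ ∪ c₂ := by
    ext w; by_cases h : x w = z w <;> simp [hc₁, hc₂, h]
  have h1 : c₁.encard ≤ wallDist P C x z := by
    refine le_iSup₂_of_le c₁ ?_ le_rfl
    exact ⟨hC.subset_mem c hcC c₁ (fun w hw => hw.1), fun w hw => hw.2⟩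
  have h2 : c₂.encard ≤ wallDist P C z y := by
    refine le_iSup₂_of_le c₂ ?_ le_rfl
    refine ⟨hC.subset_mem c hcC c₂ (fun w hw => hw.1), fun w hw => ?_⟩
    rw [← hw.2]; exact hsep w hw.1
  calc c.encard ≤ c₁.encard + c₂.encard := by rw [hunion]; exact Set.encard_union_le _ _
    _ ≤ _ := add_le_add h1 h2

/-- `dist_C` is an extended metric -/
theorem wallDist_extended_metric
    {S : Type*} (P : Set (Set (Set S))) (C : Set (Set ↥P))
    (hP : IsWallSystem P) (hC : IsDualisable P C) :
    (∀ x y : ↥P → Set S, IsUltra P x → IsUltra P y →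
      wallDist P C x y = wallDist P C y x) ∧
    (∀ x y : ↥P → Set S, IsUltra P x → IsUltra P y →
      (wallDist P C x y = 0 ↔ x = y)) ∧
    (∀ x y z : ↥P → Set S, IsUltra P x → IsUltra P y → IsUltra P z →
      wallDist P C x y ≤ wallDist P C x z + wallDist P C z y) ∧
    (∀ x ∈ dualSpace P C, ∀ y ∈ dualSpace P C, wallDist P C x y ≠ ⊤) ∧
    (∀ s t : S, wallDist P C (principalUF P s) (principalUF P t) ≠ ⊤) := by
  have hzero : ∀ x y : ↥P → Set S, wallDist P C x y = 0 ↔ x = y := by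
    intro x y
    constructor
    · intro h
      by_contra hne
      obtain ⟨w, hw⟩ : ∃ w, x w ≠ y w := by
        by_contra h'
        push_neg at h'
        exact hne (funext h')
      have : ({w} : Set ↥P).encard ≤ wallDist P C x y := by
        refine le_iSup₂_of_le {w} ?_ le_rfl
        exact ⟨hC.singleton_mem w, by simpa using hw⟩
      rw [h, Set.encard_singleton] at this
      simp at this
    · rintro rfl
      refine le_antisymm (iSup₂_le fun c hc => ?_) zero_le
      have : c = ∅ := by
        rw [Set.eq_empty_iff_forall_notMem]
        intro w hw
        exact hc.2 w hw rfl
      simp [this]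
  have hprin : ∀ s t : S, wallDist P C (principalUF P s) (principalUF P t) ≠ ⊤ := by
    intro s t
    obtain ⟨M, hM⟩ := hC.bounded s t
    have : wallDist P C (principalUF P s) (principalUF P t) ≤ (M : ℕ∞) :=
      iSup₂_le fun c hc => hM c hc.1 hc.2
    exact ne_top_of_le_ne_top (by simp) this
  refine ⟨fun x y _ _ => wallDist_symm' P C x y, fun x y _ _ => hzero x y,
    fun x y z _ _ _ => wallDist_triangle' P C hC x y z, ?_, hprin⟩
  intro x hx y hy
  rcases isEmpty_or_nonempty S with hS | hS
  · have : x = y := by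
      funext w
      exact Subsingleton.elim _ _
    rw [this, (hzero y y).mpr rfl]
    simp
  · obtain ⟨s⟩ := hS
    have h1 := hx.2 s
    have h2 := hy.2 s
    have htri := wallDist_triangle' P C hC x y (principalUF P s)
    rw [wallDist_symm' P C (principalUF P s) y] at htri
    exact ne_top_of_le_ne_top (WithTop.add_ne_top.mpr ⟨h1, h2⟩) htri

end WallDuality
end

section
/- Let (S,P) be a set with walls. (1) For x₁,x₂,x₃ ∈ X̂, the majority-vote assignment μ(x₁,x₂,x₃)(h) := the halfspace of h chosen by at least two of x₁(h), x₂(h), x₃(h) is again an ultrafilter, and μ makes X̂ a median algebra: μ is invariant under all permutations of its three arguments, μ(a,a,b) = a, and μ(a,b,μ(c,d,e)) = μ(μ(a,b,c),μ(a,b,d),e) for all a,b,c,d,e ∈ X̂. (2) If C is a dualisable system for (S,P), then X_C is median-convex: for all x₁,x₂ ∈ X_C and z ∈ X̂, μ(x₁,x₂,z) ∈ X_C. -/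
open Set

/-!
The median acts wall by wall as the Boolean majority `a ∩ b ∪ a ∩ c ∪ b ∩ c`, so the median
algebra identities are identities of the Boolean algebra `Set S`. Since a wall has only two
halfspaces, two of any three votes agree; those two voters carry the upward-closure condition
of an ultrafilter over to the median. Finally, a wall separating `μ(x₁, x₂, z)` from `φ_s`
separates `x₁` or `x₂` from `φ_s`, so cutting a member of `C` along this alternative (`C` is
closed under subsets) bounds `dist_C(μ(x₁, x₂, z), φ_s)` by `dist_C(x₁, φ_s) + dist_C(x₂, φ_s)`.
-/

namespace WallDuality

section

variable {S : Type*} {P : Set (Set (Set S))}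

theorem IsWall.eq_or_eq_or_eq {h : Set (Set S)} (hh : IsWall h) {a b c : Set S}
    (ha : a ∈ h) (hb : b ∈ h) (hc : c ∈ h) : a = b ∨ a = c ∨ b = c := by
  obtain ⟨A, rfl⟩ := hh
  simp only [mem_insert_iff, mem_singleton_iff] at ha hb hc
  rcases ha with rfl | rfl <;> rcases hb with rfl | rfl <;> rcases hc with rfl | rfl <;> tauto

section MedianAlgebra

variable (x y z : ↥P → Set S)

theorem medianUF_comm : medianUF P x y z = medianUF P y x z := by
  funext w; ext t; simp only [medianUF, mem_union, mem_inter_iff]; tauto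

theorem medianUF_rotate : medianUF P x y z = medianUF P z x y := by
  funext w; ext t; simp only [medianUF, mem_union, mem_inter_iff]; tauto

theorem medianUF_self_left : medianUF P x x y = x := by
  funext w; ext t; simp only [medianUF, mem_union, mem_inter_iff]; tauto

theorem medianUF_medianUF (a b c d e : ↥P → Set S) :
    medianUF P a b (medianUF P c d e)
      = medianUF P (medianUF P a b c) (medianUF P a b d) e := by
  funext w; ext t; simp only [medianUF, mem_union, mem_inter_iff]; tauto

end MedianAlgebra

def IsMajority (x y z : ↥P → Set S) (w : ↥P) (B : Set S) : Prop :=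
  x w = B ∧ y w = B ∨ x w = B ∧ z w = B ∨ y w = B ∧ z w = B

theorem medianUF_apply_of_isMajority {x y z : ↥P → Set S} {w : ↥P} {B : Set S}
    (h : IsMajority x y z w B) : medianUF P x y z w = B := by
  rcases h with ⟨rfl, h⟩ | ⟨rfl, h⟩ | ⟨rfl, h⟩ <;>
    · ext t; simp only [medianUF, mem_union, mem_inter_iff, h]; tauto

theorem isMajority_medianUF_apply (hP : IsWallSystem P) {x y z : ↥P → Set S}
    {w : ↥P} (hx : x w ∈ w.1) (hy : y w ∈ w.1) (hz : z w ∈ w.1) :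
    IsMajority x y z w (medianUF P x y z w) := by
  rcases (hP w.1 w.2).eq_or_eq_or_eq hx hy hz with h | h | h
  · have hB : IsMajority x y z w (x w) := Or.inl ⟨rfl, h.symm⟩
    rwa [medianUF_apply_of_isMajority hB]
  · have hB : IsMajority x y z w (x w) := Or.inr (Or.inl ⟨rfl, h.symm⟩)
    rwa [medianUF_apply_of_isMajority hB]
  · have hB : IsMajority x y z w (y w) := Or.inr (Or.inr ⟨rfl, h.symm⟩)
    rwa [medianUF_apply_of_isMajority hB]

theorem isUltra_medianUF (hP : IsWallSystem P) {x y z : ↥P → Set S}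
    (hx : IsUltra P x) (hy : IsUltra P y) (hz : IsUltra P z) :
    IsUltra P (medianUF P x y z) := by
  refine ⟨fun w => ?_, fun w₁ w₂ A B hA hB hAB hmed => ?_⟩
  · rcases isMajority_medianUF_apply hP (hx.1 w) (hy.1 w) (hz.1 w) with
      ⟨h, -⟩ | ⟨h, -⟩ | ⟨h, -⟩
    · exact h ▸ hx.1 w
    · exact h ▸ hx.1 w
    · exact h ▸ hy.1 w
  · have hvote := isMajority_medianUF_apply hP (hx.1 w₁) (hy.1 w₁) (hz.1 w₁)
    rw [hmed] at hvote
    have up {u : ↥P → Set S} (hu : IsUltra P u) (h : u w₁ = A) : u w₂ = B :=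
      hu.2 w₁ w₂ A B hA hB hAB h
    refine medianUF_apply_of_isMajority ?_
    rcases hvote with ⟨h₁, h₂⟩ | ⟨h₁, h₂⟩ | ⟨h₁, h₂⟩
    · exact Or.inl ⟨up hx h₁, up hy h₂⟩
    · exact Or.inr (Or.inl ⟨up hx h₁, up hz h₂⟩)
    · exact Or.inr (Or.inr ⟨up hy h₁, up hz h₂⟩)

theorem separates_left_or_right_of_separates_medianUF {x₁ x₂ z y : ↥P → Set S} {w : ↥P}
    (h : medianUF P x₁ x₂ z w ≠ y w) : x₁ w ≠ y w ∨ x₂ w ≠ y w := by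
  by_contra! hxy
  exact h (medianUF_apply_of_isMajority (Or.inl hxy))

section WallDist

variable {C : Set (Set ↥P)}

theorem encard_le_wallDist {c : Set ↥P} (hc : c ∈ C) {x y : ↥P → Set S}
    (hsep : ∀ w ∈ c, x w ≠ y w) : c.encard ≤ wallDist P C x y := by
  unfold wallDist
  exact le_iSup₂_of_le c ⟨hc, hsep⟩ le_rfl

theorem wallDist_le_add_of_separates (hC : ∀ c ∈ C, ∀ c' ⊆ c, c' ∈ C)
    {u x₁ x₂ y : ↥P → Set S} (hsep : ∀ w, u w ≠ y w → x₁ w ≠ y w ∨ x₂ w ≠ y w) :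
    wallDist P C u y ≤ wallDist P C x₁ y + wallDist P C x₂ y := by
  refine iSup₂_le fun c ⟨hcC, hcu⟩ => ?_
  let c₁ : Set ↥P := {w ∈ c | x₁ w ≠ y w}
  have hc₁ : c₁ ⊆ c := sep_subset _ _
  have hc₂ : ∀ w ∈ c \ c₁, x₂ w ≠ y w := fun w ⟨hwc, hw₁⟩ =>
    (hsep w (hcu w hwc)).resolve_left fun h => hw₁ ⟨hwc, h⟩
  calc c.encard = (c₁ ∪ c \ c₁).encard := by rw [union_sdiff_cancel hc₁]
    _ ≤ c₁.encard + (c \ c₁).encard := encard_union_le _ _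
    _ ≤ wallDist P C x₁ y + wallDist P C x₂ y :=
      add_le_add (encard_le_wallDist (hC c hcC c₁ hc₁) fun _ hw => hw.2)
        (encard_le_wallDist (hC c hcC _ sdiff_subset) hc₂)

end WallDist

theorem medianUF_mem_dualSpace (hP : IsWallSystem P) {C : Set (Set ↥P)}
    (hC : IsDualisable P C) {x₁ x₂ z : ↥P → Set S} (hx₁ : x₁ ∈ dualSpace P C)
    (hx₂ : x₂ ∈ dualSpace P C) (hz : IsUltra P z) : medianUF P x₁ x₂ z ∈ dualSpace P C := by
  refine ⟨isUltra_medianUF hP hx₁.1 hx₂.1 hz, fun s => ?_⟩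
  have hle := wallDist_le_add_of_separates (P := P) hC.subset_mem
    (u := medianUF P x₁ x₂ z) (y := principalUF P s)
    fun _ => separates_left_or_right_of_separates_medianUF
  exact ne_top_of_le_ne_top (WithTop.add_ne_top.2 ⟨hx₁.2 s, hx₂.2 s⟩) hle

end

/-- The majority-vote median makes `X̂` a median algebra, and the dual space `X_C`
of any dualisable system is median-convex in `X̂`. -/
theorem median_algebra_and_convexity
    {S : Type*} (P : Set (Set (Set S))) (hP : IsWallSystem P) :
    (∀ x y z : ↥P → Set S, IsUltra P x → IsUltra P y → IsUltra P z →
      IsUltra P (medianUF P x y z)) ∧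
    (∀ x y z : ↥P → Set S, IsUltra P x → IsUltra P y → IsUltra P z →
      medianUF P x y z = medianUF P y x z ∧ medianUF P x y z = medianUF P z x y) ∧
    (∀ a b : ↥P → Set S, IsUltra P a → IsUltra P b → medianUF P a a b = a) ∧
    (∀ a b c d e : ↥P → Set S, IsUltra P a → IsUltra P b → IsUltra P c →
      IsUltra P d → IsUltra P e →
      medianUF P a b (medianUF P c d e)
        = medianUF P (medianUF P a b c) (medianUF P a b d) e) ∧
    (∀ C : Set (Set ↥P), IsDualisable P C →
      ∀ x₁ ∈ dualSpace P C, ∀ x₂ ∈ dualSpace P C, ∀ z : ↥P → Set S, IsUltra P z →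
        medianUF P x₁ x₂ z ∈ dualSpace P C) :=
  ⟨fun _ _ _ hx hy hz => isUltra_medianUF hP hx hy hz,
    fun x y z _ _ _ => ⟨medianUF_comm x y z, medianUF_rotate x y z⟩,
    fun a b _ _ => medianUF_self_left a b,
    fun a b c d e _ _ _ _ _ => medianUF_medianUF a b c d e,
    fun _ hC _ hx₁ _ hx₂ _ hz => medianUF_mem_dualSpace hP hC hx₁ hx₂ hz⟩

end WallDuality
end

section
/- Gates exist for P-convex sets: let (S,P) be a set with walls, let Ĉ ⊆ X̂ be a nonempty P-convex set, and let z ∈ X̂. Define an orientation w of the walls by w(h) = z(h) if some v ∈ Ĉ has v(h) = z(h), and w(h) = the halfspace of h opposite to z(h) if every v ∈ Ĉ has v(h) ≠ z(h). Then w is an ultrafilter and w ∈ Ĉ. -/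
open Set

/-! The walls separating `z` from a nonempty set `C'` of ultrafilters are oriented
alike by every member of `C'`; on every other wall some member of `C'` agrees with `z`.
So on each wall the gate copies some member of `C'`, which forces it into `C'` when `C'`
is `P`-convex, and the ultrafilter condition for the gate is inherited, wall pair by wall
pair, either from `z` or from the members of `C'`. -/

namespace WallDuality

section

variable {S : Type*}

theorem IsWall.eq_compl_of_ne {h : Set (Set S)} (hw : IsWall h) {A B : Set S}
    (hA : A ∈ h) (hB : B ∈ h) (hne : B ≠ A) : B = Aᶜ := by
  obtain ⟨D, rfl⟩ := hw
  rcases hA with rfl | rfl <;> rcases hB with rfl | rfl <;> simp_all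

variable {P : Set (Set (Set S))} {C' : Set (↥P → Set S)} {z : ↥P → Set S}

theorem gateUF_apply_of_exists {w : ↥P} (h : ∃ v ∈ C', v w = z w) :
    gateUF P C' z w = z w := by
  simp only [gateUF, if_pos h]

theorem gateUF_apply_of_separates (hP : IsWallSystem P) (hC' : C' ⊆ hatX P)
    (hz : IsUltra P z) {w : ↥P} (h : ¬∃ v ∈ C', v w = z w) {v : ↥P → Set S}
    (hv : v ∈ C') : gateUF P C' z w = v w := by
  have hvw : v w = (z w)ᶜ :=
    (hP w.1 w.2).eq_compl_of_ne (hz.1 w) ((hC' hv).1 w) fun hvz => h ⟨v, hv, hvz⟩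
  simp only [gateUF, if_neg h, hvw]

theorem exists_mem_gateUF_apply_eq (hP : IsWallSystem P) (hC' : C' ⊆ hatX P)
    (hne : C'.Nonempty) (hz : IsUltra P z) (w : ↥P) :
    ∃ v ∈ C', gateUF P C' z w = v w := by
  by_cases h : ∃ v ∈ C', v w = z w
  · obtain ⟨v, hv, hvz⟩ := h
    exact ⟨v, hv, (gateUF_apply_of_exists ⟨v, hv, hvz⟩).trans hvz.symm⟩
  · obtain ⟨v, hv⟩ := hne
    exact ⟨v, hv, gateUF_apply_of_separates hP hC' hz h hv⟩

theorem isUltra_gateUF (hP : IsWallSystem P) (hC' : C' ⊆ hatX P) (hne : C'.Nonempty)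
    (hz : IsUltra P z) : IsUltra P (gateUF P C' z) := by
  refine ⟨fun w => ?_, fun w₁ w₂ A B hA hB hAB hgA => ?_⟩
  · obtain ⟨v, hv, hgv⟩ := exists_mem_gateUF_apply_eq hP hC' hne hz w
    exact hgv ▸ (hC' hv).1 w
  by_cases h₁ : ∃ v ∈ C', v w₁ = z w₁
  · obtain ⟨v, hv, hvz⟩ := h₁
    rw [gateUF_apply_of_exists ⟨v, hv, hvz⟩] at hgA
    have hzB : z w₂ = B := hz.2 w₁ w₂ A B hA hB hAB hgA
    have hvB : v w₂ = B := (hC' hv).2 w₁ w₂ A B hA hB hAB (hvz.trans hgA)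
    rw [gateUF_apply_of_exists ⟨v, hv, hvB.trans hzB.symm⟩, hzB]
  · -- every member of `C'` takes `A` on `w₁`, hence `B` on `w₂`, and the gate copies one
    obtain ⟨v, hv, hgv⟩ := exists_mem_gateUF_apply_eq hP hC' hne hz w₂
    have hvA : v w₁ = A := (gateUF_apply_of_separates hP hC' hz h₁ hv).symm.trans hgA
    exact hgv.trans ((hC' hv).2 w₁ w₂ A B hA hB hAB hvA)

theorem IsPConvex.subset_hatX (hconv : IsPConvex P C') : C' ⊆ hatX P := by
  obtain ⟨Q, σ, -, rfl⟩ := hconv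
  exact fun v hv => hv.1

theorem IsPConvex.mem_of_forall_exists_eq (hconv : IsPConvex P C') {x : ↥P → Set S}
    (hx : IsUltra P x) (h : ∀ w, ∃ v ∈ C', x w = v w) : x ∈ C' := by
  obtain ⟨Q, σ, -, rfl⟩ := hconv
  refine ⟨hx, fun w hw => ?_⟩
  obtain ⟨v, hv, hxv⟩ := h w
  exact hxv.trans (hv.2 w hw)

end

/-- **Gates** (Proposition 3.8): for a nonempty `P`-convex set `C'` and an
ultrafilter `z`, the orientation obtained from `z` by reversing exactly the walls
separating `z` from `C'` is an ultrafilter lying in `C'`. -/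
theorem gate_is_ultrafilter_mem
    {S : Type*} (P : Set (Set (Set S))) (hP : IsWallSystem P)
    (C' : Set (↥P → Set S)) (hconv : IsPConvex P C') (hne : C'.Nonempty)
    (z : ↥P → Set S) (hz : IsUltra P z) :
    IsUltra P (gateUF P C' z) ∧ gateUF P C' z ∈ C' := by
  have hC' := hconv.subset_hatX
  have hgate := isUltra_gateUF hP hC' hne hz
  exact ⟨hgate, hconv.mem_of_forall_exists_eq hgate
    (exists_mem_gateUF_apply_eq hP hC' hne hz)⟩

end WallDuality
end

section
/- Gate maps are 1-Lipschitz: let C be a dualisable system on a set with walls (S,P), let Ĉ ⊆ X̂ be a nonempty P-convex set with X_C ∩ Ĉ nonempty, and let g denote the gate map to Ĉ. For subsets A,B ⊆ X_C, if a wall h ∈ P separates g(A) from g(B) (every point of g(A) chooses one halfspace of h and every point of g(B) the other), then h separates A from B. In particular, dist_C(g(x),g(y)) ≤ dist_C(x,y) for all x,y ∈ X_C. -/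
open Set

namespace WallDuality

/-- A wall `w` separates `A` from `B`: all points of `A` choose one halfspace of
`w` and all points of `B` the other. -/
def SeparatesSets {S : Type*} (P : Set (Set (Set S))) (w : ↥P)
    (A B : Set (↥P → Set S)) : Prop :=
  ∃ H ∈ w.1, (∀ a ∈ A, a w = H) ∧ ∀ b ∈ B, b w = Hᶜ

section Gate

variable {S : Type*} {P : Set (Set (Set S))}

theorem gateUF_apply_congr (C' : Set (↥P → Set S)) {x y : ↥P → Set S} {w : ↥P}
    (h : x w = y w) : gateUF P C' x w = gateUF P C' y w := by
  unfold gateUF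
  rw [h]

/-- At a wall `w` the gate acts on the two halfspaces as the identity (both meet `C'`),
the swap (neither does) or a constant map (exactly one does, and then no two images
are complementary). -/
theorem eq_compl_of_gateUF_apply_eq_compl (C' : Set (↥P → Set S)) {x y : ↥P → Set S}
    {w : ↥P} (h : gateUF P C' y w = (gateUF P C' x w)ᶜ) : x w = (y w)ᶜ := by
  simp only [gateUF] at h
  split_ifs at h <;> grind [compl_compl]

theorem wallDist_le_of_ne_imp_ne (C : Set (Set ↥P)) {x y x' y' : ↥P → Set S}
    (h : ∀ w, x' w ≠ y' w → x w ≠ y w) : wallDist P C x' y' ≤ wallDist P C x y :=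
  iSup₂_le fun _ hc => le_biSup _ ⟨hc.1, fun w hw => h w (hc.2 w hw)⟩

end Gate

theorem gate_lipschitz_general
    {S : Type*} (P : Set (Set (Set S))) (C : Set (Set ↥P))
    (C' : Set (↥P → Set S)) :
    (∀ A B : Set (↥P → Set S), A.Nonempty → B.Nonempty →
      A ⊆ dualSpace P C → B ⊆ dualSpace P C → ∀ w : ↥P,
      SeparatesSets P w (gateUF P C' '' A) (gateUF P C' '' B) →
      SeparatesSets P w A B) ∧
    (∀ x ∈ dualSpace P C, ∀ y ∈ dualSpace P C,
      wallDist P C (gateUF P C' x) (gateUF P C' y) ≤ wallDist P C x y) := by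
  constructor
  · rintro A B ⟨a₀, ha₀⟩ ⟨b₀, hb₀⟩ hA _ w ⟨H, -, hgA, hgB⟩
    have sep : ∀ a ∈ A, ∀ b ∈ B, a w = (b w)ᶜ := fun a ha b hb =>
      eq_compl_of_gateUF_apply_eq_compl C' <| by
        rw [hgA _ (mem_image_of_mem _ ha), hgB _ (mem_image_of_mem _ hb)]
    refine ⟨a₀ w, (hA ha₀).1.1 w, fun a ha => ?_, fun b hb => ?_⟩
    · rw [sep a ha b₀ hb₀, sep a₀ ha₀ b₀ hb₀]
    · rw [sep a₀ ha₀ b hb, compl_compl]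
  · exact fun x _ y _ => wallDist_le_of_ne_imp_ne C fun w hne hxy =>
      hne (gateUF_apply_congr C' hxy)

/-- **Gate maps are 1-Lipschitz** (Lemma 3.12): any wall separating the gate
images of two subsets of `X_C` separates the subsets themselves; in particular
the gate map does not increase `dist_C`. -/
theorem gate_lipschitz
    {S : Type*} (P : Set (Set (Set S))) (C : Set (Set ↥P))
    (hP : IsWallSystem P) (hC : IsDualisable P C)
    (C' : Set (↥P → Set S)) (hconv : IsPConvex P C')
    (hne : (dualSpace P C ∩ C').Nonempty) :
    (∀ A B : Set (↥P → Set S), A.Nonempty → B.Nonempty →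
      A ⊆ dualSpace P C → B ⊆ dualSpace P C → ∀ w : ↥P,
      SeparatesSets P w (gateUF P C' '' A) (gateUF P C' '' B) →
      SeparatesSets P w A B) ∧
    (∀ x ∈ dualSpace P C, ∀ y ∈ dualSpace P C,
      wallDist P C (gateUF P C' x) (gateUF P C' y) ≤ wallDist P C x y) :=
  gate_lipschitz_general P C C'

end WallDuality
end

section
/- Balls are gated in duals of systems of chains: if C is a system of chains on a set with walls (S,P), then for every x ∈ X_C and every r ∈ ℕ, the ball B(x,r) = {z ∈ X_C : dist_C(x,z) ≤ r} equals X_C ∩ Ĉ for some nonempty P-convex subset Ĉ ⊆ X̂; in particular, every ball in X_C is a gated subset of the median algebra X_C. -/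
open Set

namespace WallDuality

lemma wall_eq_compl' {S : Type*} {P : Set (Set (Set S))} (hP : IsWallSystem P)
    {w : ↥P} {A B : Set S} (hA : A ∈ w.1) (hB : B ∈ w.1) (hAB : A ≠ B) : B = Aᶜ := by
  obtain ⟨A₀, hw⟩ := hP w.1 w.2
  rw [hw, Set.mem_insert_iff, Set.mem_singleton_iff] at hA hB
  rcases hA with rfl | rfl <;> rcases hB with rfl | rfl <;> simp_all [compl_compl]

lemma compl_mem_wall' {S : Type*} {P : Set (Set (Set S))} (hP : IsWallSystem P)
    {w : ↥P} {A : Set S} (hA : A ∈ w.1) : Aᶜ ∈ w.1 := by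
  obtain ⟨A₀, hw⟩ := hP w.1 w.2
  rw [hw, Set.mem_insert_iff, Set.mem_singleton_iff] at hA ⊢
  rcases hA with rfl | rfl <;> simp [compl_compl]

/-- **Balls are gated** (Lemma 4.2): in the dual of a system of chains, every ball
is the trace on `X_C` of a nonempty `P`-convex subset of `X̂`; in particular every
ball is a gated subset of the median algebra `X_C`. -/
theorem balls_gated
    {S : Type*} (P : Set (Set (Set S))) (C : Set (Set ↥P))
    (hP : IsWallSystem P) (hC : IsChainSystem P C)
    (x : ↥P → Set S) (hx : x ∈ dualSpace P C) (r : ℕ) :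
    (∃ C' : Set (↥P → Set S), IsPConvex P C' ∧ C'.Nonempty ∧
      ballX P C x (r : ℕ∞) = dualSpace P C ∩ C') ∧
    IsGatedIn P (dualSpace P C) (ballX P C x (r : ℕ∞)) := by
  classical
  obtain ⟨hxu, hxd⟩ := hx
  -- the set of "forced" walls
  set Q : Set ↥P := {w | ∃ c ∈ C, ∃ σ : ↥P → Set S, c.encard = (r : ℕ∞) + 1 ∧
    IsChainOrder P σ c ∧ (∀ w' ∈ c, σ w' ≠ x w') ∧ ∀ w' ∈ c, (x w)ᶜ ⊆ σ w'} with hQdef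
  -- Key A: points of the ball agree with `x` on `Q`.
  have keyA : ∀ z : ↥P → Set S, IsUltra P z → wallDist P C x z ≤ (r : ℕ∞) →
      ∀ w ∈ Q, z w = x w := by
    intro z hz hdist w hw
    by_contra hne
    obtain ⟨c, hcC, σ, hcard, hch, hσx, hmin⟩ := hw
    have hzw : z w = (x w)ᶜ := wall_eq_compl' hP (hxu.1 w) (hz.1 w) (fun h => hne h.symm)
    have hsep : ∀ w' ∈ c, x w' ≠ z w' := by
      intro w' hw'
      have hzw' : z w' = σ w' :=
        hz.2 w w' ((x w)ᶜ) (σ w') (compl_mem_wall' hP (hxu.1 w)) (hch.1 w' hw')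
          (hmin w' hw') hzw
      rw [hzw']
      exact fun h => hσx w' hw' h.symm
    have hle : c.encard ≤ wallDist P C x z := by
      unfold wallDist
      exact le_biSup Set.encard ⟨hcC, hsep⟩
    rw [hcard] at hle
    have := hle.trans hdist
    exact absurd ((ENat.add_one_le_iff (ENat.coe_ne_top r)).1 this) (lt_irrefl _)
  -- Key B: ultrafilters agreeing with `x` on `Q` lie within distance `r`.
  have keyB : ∀ z : ↥P → Set S, IsUltra P z → (∀ w ∈ Q, z w = x w) →
      wallDist P C x z ≤ (r : ℕ∞) := by
    intro z hz hagree
    unfold wallDist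
    refine iSup₂_le ?_
    rintro c ⟨hcC, hsep⟩
    by_contra hgt
    rw [not_le] at hgt
    have h1 : (r : ℕ∞) + 1 ≤ c.encard := (ENat.add_one_le_iff (ENat.coe_ne_top r)).2 hgt
    obtain ⟨c', hc'sub, hc'card⟩ := Set.exists_subset_encard_eq h1
    have hc'C : c' ∈ C := hC.1.subset_mem c hcC c' hc'sub
    have hsep' : ∀ w ∈ c', x w ≠ z w := fun w hw => hsep w (hc'sub hw)
    obtain ⟨τ, hτ⟩ := hC.2 c' hc'C
    have hfin : c'.Finite := by
      rw [← Set.encard_ne_top_iff, hc'card]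
      exact WithTop.add_ne_top.2 ⟨ENat.coe_ne_top r, ENat.one_ne_top⟩
    have hne : c'.Nonempty := by
      rw [← Set.encard_ne_zero, hc'card]
      simp
    have vcompl : ∀ w ∈ c', z w = (x w)ᶜ := fun w hw =>
      wall_eq_compl' hP (hxu.1 w) (hz.1 w) (hsep' w hw)
    have hxτ : ∀ w ∈ c', z w ≠ τ w → x w = τ w := by
      intro w hw hzτ
      by_contra hxne
      exact hzτ ((vcompl w hw).trans
        (wall_eq_compl' hP (hxu.1 w) (hτ.1 w hw) hxne).symm)
    have aux : ∀ w₁ ∈ c', ∀ w₂ ∈ c', τ w₁ ⊆ τ w₂ → (z w₁ ⊆ z w₂ ∨ z w₂ ⊆ z w₁) := by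
      intro w₁ h1 w₂ h2 hsub
      by_cases e1 : z w₁ = τ w₁
      · left
        rw [e1, hz.2 w₁ w₂ (τ w₁) (τ w₂) (hτ.1 _ h1) (hτ.1 _ h2) hsub e1]
        exact hsub
      · by_cases e2 : z w₂ = τ w₂
        · exfalso
          have hx1 := hxτ w₁ h1 e1
          have hx2 := hxu.2 w₁ w₂ (τ w₁) (τ w₂) (hτ.1 _ h1) (hτ.1 _ h2) hsub hx1
          exact hsep' w₂ h2 (hx2.trans e2.symm)
        · right
          rw [vcompl w₁ h1, vcompl w₂ h2, hxτ w₁ h1 e1, hxτ w₂ h2 e2]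
          exact compl_subset_compl.2 hsub
    have hnested : ∀ w₁ ∈ c', ∀ w₂ ∈ c', z w₁ ⊆ z w₂ ∨ z w₂ ⊆ z w₁ := by
      intro w₁ h1 w₂ h2
      rcases hτ.2 w₁ h1 w₂ h2 with h | h
      · exact aux w₁ h1 w₂ h2 h
      · exact (aux w₂ h2 w₁ h1 h).symm
    obtain ⟨w₀, hw₀c, hw₀min⟩ := Set.Finite.exists_minimalFor z c' hfin hne
    have hmin' : ∀ w' ∈ c', z w₀ ⊆ z w' := by
      intro w' hw'
      rcases hnested w₀ hw₀c w' hw' with h | h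
      · exact h
      · exact hw₀min hw' h
    have hw₀Q : w₀ ∈ Q := by
      refine ⟨c', hc'C, z, hc'card, ⟨fun w _ => hz.1 w, hnested⟩,
        fun w' hw' => fun h => hsep' w' hw' h.symm, fun w' hw' => ?_⟩
      rw [← vcompl w₀ hw₀c]
      exact hmin' w' hw'
    exact hsep' w₀ hw₀c (hagree w₀ hw₀Q).symm
  -- the convex set
  set C' : Set (↥P → Set S) := {v | IsUltra P v ∧ ∀ w ∈ Q, v w = x w} with hC'def
  have ball_eq : ballX P C x (r : ℕ∞) = dualSpace P C ∩ C' := by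
    ext z
    constructor
    · rintro ⟨hzd, hzle⟩
      exact ⟨hzd, hzd.1, keyA z hzd.1 hzle⟩
    · rintro ⟨hzd, _, hagree⟩
      exact ⟨hzd, keyB z hzd.1 hagree⟩
  have convex_part : ∃ C'' : Set (↥P → Set S), IsPConvex P C'' ∧ C''.Nonempty ∧
      ballX P C x (r : ℕ∞) = dualSpace P C ∩ C'' :=
    ⟨C', ⟨Q, x, fun w _ => hxu.1 w, rfl⟩, ⟨x, hxu, fun _ _ => rfl⟩, ball_eq⟩
  refine ⟨convex_part, ?_⟩
  -- gatedness
  intro y hy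
  obtain ⟨hyu, hyd⟩ := hy
  set g : ↥P → Set S := fun w => if w ∈ Q then x w else y w with hgdef
  -- Q is upward closed
  have hQup : ∀ w₁ ∈ Q, ∀ (w₂ : ↥P) (B : Set S), B ∈ w₂.1 → x w₁ ⊆ B →
      (x w₂ = B ∧ w₂ ∈ Q) := by
    intro w₁ hw₁ w₂ B hB hsub
    have hx2 : x w₂ = B := hxu.2 w₁ w₂ (x w₁) B (hxu.1 w₁) hB hsub rfl
    obtain ⟨c, hcC, σ, hcard, hch, hne, hmin⟩ := hw₁
    refine ⟨hx2, c, hcC, σ, hcard, hch, hne, fun w' hw' => ?_⟩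
    rw [hx2]
    exact (compl_subset_compl.2 hsub).trans (hmin w' hw')
  have gultra : IsUltra P g := by
    constructor
    · intro w
      by_cases h : w ∈ Q <;> simp only [hgdef, h, if_pos, if_neg, if_true, if_false]
      · exact hxu.1 w
      · exact hyu.1 w
    · intro w₁ w₂ A B hA hB hAB hgw₁
      by_cases h1 : w₁ ∈ Q
      · have hx1 : x w₁ = A := by simpa only [hgdef, if_pos h1] using hgw₁
        obtain ⟨hx2, h2⟩ := hQup w₁ h1 w₂ B hB (hx1 ▸ hAB)
        simp only [hgdef, if_pos h2]
        exact hx2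
      · have hy1 : y w₁ = A := by simpa only [hgdef, if_neg h1] using hgw₁
        by_cases h2 : w₂ ∈ Q
        · simp only [hgdef, if_pos h2]
          by_contra hxne
          have hx2c : x w₂ = Bᶜ := wall_eq_compl' hP hB (hxu.1 w₂) (fun h => hxne h.symm)
          obtain ⟨c, hcC, σ, hcard, hch, hne2, hmin⟩ := h2
          have hBmin : ∀ w' ∈ c, B ⊆ σ w' := by
            intro w' hw'
            have := hmin w' hw'
            rwa [hx2c, compl_compl] at this
          by_cases hx1 : x w₁ = A
          · exact hxne (hxu.2 w₁ w₂ A B hA hB hAB hx1)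
          · apply h1
            refine ⟨c, hcC, σ, hcard, hch, hne2, fun w' hw' => ?_⟩
            rw [wall_eq_compl' hP hA (hxu.1 w₁) (fun h => hx1 h.symm), compl_compl]
            exact hAB.trans (hBmin w' hw')
        · have hy2 := hyu.2 w₁ w₂ A B hA hB hAB hy1
          simp only [hgdef, if_neg h2]
          exact hy2
  have hgC' : g ∈ C' := ⟨gultra, fun w hw => by simp only [hgdef, if_pos hw]⟩
  have hgd : g ∈ dualSpace P C := by
    refine ⟨gultra, fun s => ?_⟩
    have hbound : wallDist P C g (principalUF P s) ≤
        wallDist P C x (principalUF P s) + wallDist P C y (principalUF P s) := by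
      unfold wallDist
      refine iSup₂_le ?_
      rintro c ⟨hcC, hsep⟩
      have h1 : (c ∩ Q).encard ≤ ⨆ c ∈ {c | c ∈ C ∧ ∀ w ∈ c,
          x w ≠ principalUF P s w}, c.encard := by
        refine le_biSup Set.encard ⟨hC.1.subset_mem c hcC _ Set.inter_subset_left, ?_⟩
        intro w hw
        have := hsep w hw.1
        simpa only [hgdef, if_pos hw.2] using this
      have h2 : (c \ Q).encard ≤ ⨆ c ∈ {c | c ∈ C ∧ ∀ w ∈ c,
          y w ≠ principalUF P s w}, c.encard := by
        refine le_biSup Set.encard ⟨hC.1.subset_mem c hcC _ Set.diff_subset, ?_⟩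
        intro w hw
        have := hsep w hw.1
        simpa only [hgdef, if_neg hw.2] using this
      calc c.encard = ((c ∩ Q) ∪ (c \ Q)).encard := by rw [Set.inter_union_diff]
        _ ≤ (c ∩ Q).encard + (c \ Q).encard := Set.encard_union_le _ _
        _ ≤ _ := add_le_add h1 h2
    exact ne_top_of_le_ne_top (WithTop.add_ne_top.2 ⟨hxd s, hyd s⟩) hbound
  have hgball : g ∈ ballX P C x (r : ℕ∞) := by
    rw [ball_eq]
    exact ⟨hgd, hgC'⟩
  have hgate : ∀ a ∈ ballX P C x (r : ℕ∞), medianUF P a g y = g := by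
    intro a ha
    have haC' : ∀ w ∈ Q, a w = x w := by
      rw [ball_eq] at ha
      exact ha.2.2
    funext w
    show a w ∩ g w ∪ a w ∩ y w ∪ g w ∩ y w = g w
    by_cases hw : w ∈ Q
    · have hag : a w = g w := by
        rw [haC' w hw, hgdef]
        simp only [if_pos hw]
      rw [hag]
      ext t
      simp only [Set.mem_union, Set.mem_inter_iff]
      tauto
    · have hgy : g w = y w := by simp only [hgdef, if_neg hw]
      rw [hgy]
      ext t
      simp only [Set.mem_union, Set.mem_inter_iff]
      tauto
  refine ⟨g, ⟨hgball, hgate⟩, ?_⟩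
  rintro g' ⟨hg'ball, hg'gate⟩
  have h1 := hg'gate g hgball
  have h2 := hgate g' hg'ball
  have hsym : medianUF P g g' y = medianUF P g' g y := by
    funext w
    show g w ∩ g' w ∪ g w ∩ y w ∪ g' w ∩ y w =
      g' w ∩ g w ∪ g' w ∩ y w ∪ g w ∩ y w
    ext t
    simp only [Set.mem_union, Set.mem_inter_iff]
    tauto
  rw [← h1, hsym, h2]

end WallDuality
end
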